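/- Let p₁,…,pₙ and q₁,…,qₙ be real numbers with the q_i pairwise distinct, T_{ij} = 1 + sgn(q_i−q_j), E_{ij} = e^{−|q_i−q_j|}, P = diag(p₁,…,pₙ), and define the Novikov Lax matrix L^N = T P E P. Let L^{CH} be the matrix with entries (L^{CH})_{ij} = √(p̄_i p̄_j) e^{−|q̄_i−q̄_j|/2} where p̄_i = p_i² and q̄_i = 2q_i (assuming all p_i > 0). Then L^N = T̄ L^{CH}, where T̄_{ij} = 1 + sgn(q̄_i−q̄_j) = T_{ij}. -/

import Mathlib

open Matrix BigOperators Real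

/-
Since q̄ = 2q, the twist T̄ equals T, and the Camassa–Holm entry
√(p_i² p_j²) e^{-|2q_i - 2q_j|/2} is p_i e^{-|q_i - q_j|} p_j, i.e. L^{CH} = P E P.
Hence L^N = T (P E P) = T̄ L^{CH} by associativity.
-/

theorem Real.sign_mul_of_pos_left {c : ℝ} (hc : 0 < c) (x : ℝ) :
    Real.sign (c * x) = Real.sign x := by
  rcases lt_trichotomy x 0 with hx | rfl | hx
  · rw [Real.sign_of_neg hx, Real.sign_of_neg (mul_neg_of_pos_of_neg hc hx)]
  · rw [mul_zero]
  · rw [Real.sign_of_pos hx, Real.sign_of_pos (mul_pos hc hx)]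

theorem Real.sqrt_sq_mul_sq {a b : ℝ} (ha : 0 ≤ a) (hb : 0 ≤ b) :
    Real.sqrt (a ^ 2 * b ^ 2) = a * b := by
  rw [← mul_pow, Real.sqrt_sq (mul_nonneg ha hb)]

theorem abs_two_mul_sub_two_mul_div_two (x y : ℝ) : |2 * x - 2 * y| / 2 = |x - y| := by
  rw [← mul_sub, abs_mul, abs_two, mul_div_cancel_left₀ _ two_ne_zero]

theorem novikov_Lax_is_twisted_CH (n : ℕ) (p q : Fin n → ℝ)
    (hp : ∀ i, 0 < p i) :
    let T : Matrix (Fin n) (Fin n) ℝ := fun i j => 1 + Real.sign (q i - q j)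
    let Emat : Matrix (Fin n) (Fin n) ℝ := fun i j => Real.exp (-(|q i - q j|))
    let Pm : Matrix (Fin n) (Fin n) ℝ := Matrix.diagonal p
    let LN : Matrix (Fin n) (Fin n) ℝ := T * Pm * Emat * Pm
    let pbar : Fin n → ℝ := fun i => (p i) ^ 2
    let qbar : Fin n → ℝ := fun i => 2 * q i
    let LCH : Matrix (Fin n) (Fin n) ℝ :=
      fun i j => Real.sqrt (pbar i * pbar j) * Real.exp (-(|qbar i - qbar j|) / 2)
    let Tbar : Matrix (Fin n) (Fin n) ℝ :=
      fun i j => 1 + Real.sign (qbar i - qbar j)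
    LN = Tbar * LCH ∧ Tbar = T := by
  intro T Emat Pm LN pbar qbar LCH Tbar
  have hTbar : Tbar = T := by
    ext i j
    simp only [Tbar, T, qbar, ← mul_sub, Real.sign_mul_of_pos_left two_pos]
  have hLCH : LCH = Pm * Emat * Pm := by
    ext i j
    rw [Matrix.mul_diagonal, Matrix.diagonal_mul]
    simp only [LCH, Emat, pbar, qbar, neg_div, abs_two_mul_sub_two_mul_div_two,
      Real.sqrt_sq_mul_sq (hp i).le (hp j).le]
    ring
  refine ⟨?_, hTbar⟩
  rw [hTbar, hLCH]
  simp only [LN, Matrix.mul_assoc]
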